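/- With φ(x) := x − x³/3, there exist constants C > 0 and h₀ > 0 such that for all h ∈ (0, h₀), ∬_{{(x,y) : 0 < y < x}} exp( (2/h)·(φ(x) − φ(y)) ) dy dx ≤ C·exp( 4/(3h) ). -/
import Mathlib


noncomputable section

open MeasureTheory

/-- `φ(x) = x − x³/3`. -/
def φ (x : ℝ) : ℝ := x - x ^ 3 / 3

lemma lemA {x y : ℝ} (hy : 0 < y) (hyx : y < x) : φ x - φ y ≤ 2/3 := by
  simp only [φ]
  rcases le_or_gt y 1 with h1 | h1
  · nlinarith [mul_nonneg (mul_nonneg (sq_nonneg (x-1)) hy.le) hy.le, sq_nonneg (x-1),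
      mul_nonneg hy.le (by nlinarith : (0:ℝ) ≤ 1 - y^2),
      mul_nonneg (sq_nonneg (x-1)) (by linarith : (0:ℝ) ≤ x + 2)]
  · nlinarith [mul_nonneg (sub_nonneg.2 hyx.le) (by nlinarith : (0:ℝ) ≤ x^2 + x*y + y^2 - 3)]

lemma lemB {x y : ℝ} (hx : 3 ≤ x) (hy : 0 < y) (hyx : y < x) :
    2*(φ x - φ y - 2/3) ≤ -(4/9) * x^2 * (x - y) := by
  simp only [φ]
  nlinarith [mul_nonneg (sub_nonneg.2 hyx.le) (by nlinarith : (0:ℝ) ≤ x^2 - 9),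
    mul_nonneg (mul_nonneg (sub_nonneg.2 hyx.le) (by linarith : (0:ℝ) ≤ x)) hy.le,
    mul_nonneg (sub_nonneg.2 hyx.le) (mul_nonneg hy.le hy.le)]

lemma slice_le (c x : ℝ) (hc : 0 < c) (hx : 0 < x) :
    ∫ y in Set.Ioo 0 x, Real.exp (c*y - c*x) ≤ 1/c := by
  have key : ∫ y in (0:ℝ)..x, Real.exp (c*y - c*x)
      = (fun y => Real.exp (c*y - c*x)/c) x - (fun y => Real.exp (c*y - c*x)/c) 0 := by
    refine intervalIntegral.integral_eq_sub_of_hasDerivAt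
      (f := fun y => Real.exp (c*y - c*x)/c) (f' := fun y => Real.exp (c*y - c*x)) ?_ ?_
    · intro t _
      have h1 : HasDerivAt (fun y : ℝ => c*y - c*x) c t := by
        simpa using ((hasDerivAt_id t).const_mul c).sub_const (c*x)
      have h2 := (h1.exp).div_const c
      simpa [mul_div_cancel_right₀ _ hc.ne'] using h2
    · exact (Real.continuous_exp.comp (by continuity)).intervalIntegrable 0 x
  rw [intervalIntegral.integral_of_le hx.le, integral_Ioc_eq_integral_Ioo] at key
  rw [key]
  simp only [sub_self, Real.exp_zero]
  have h3 : 0 ≤ Real.exp (c*0 - c*x)/c := by positivity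
  linarith

lemma slice_integrable (c x : ℝ) :
    IntegrableOn (fun y => Real.exp (c*y - c*x)) (Set.Ioo 0 x) := by
  have h : Continuous (fun y : ℝ => Real.exp (c*y - c*x)) := by continuity
  exact (h.continuousOn.integrableOn_compact isCompact_Icc).mono_set Set.Ioo_subset_Icc_self

def S₂ : Set (ℝ × ℝ) := {p | 3 < p.1 ∧ 0 < p.2 ∧ p.2 < p.1}

def G : ℝ × ℝ → ℝ := fun p => Real.exp ((4/9)*p.1^2*p.2 - (4/9)*p.1^2*p.1)

lemma hS₂open : IsOpen S₂ := by
  have h1 : IsOpen {p : ℝ × ℝ | 3 < p.1} := isOpen_lt continuous_const continuous_fst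
  have h2 : IsOpen {p : ℝ × ℝ | 0 < p.2} := isOpen_lt continuous_const continuous_snd
  have h3 : IsOpen {p : ℝ × ℝ | p.2 < p.1} := isOpen_lt continuous_snd continuous_fst
  have : S₂ = {p : ℝ × ℝ | 3 < p.1} ∩ ({p : ℝ × ℝ | 0 < p.2} ∩ {p : ℝ × ℝ | p.2 < p.1}) := by
    ext p; simp [S₂, Set.mem_inter_iff, and_assoc]
  rw [this]; exact h1.inter (h2.inter h3)

lemma hGcont : Continuous G := by unfold G; continuity

lemma G_integrable : Integrable (S₂.indicator G) := by
  have hS := hS₂open.measurableSet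
  have hF : AEStronglyMeasurable (S₂.indicator G) (volume : Measure (ℝ × ℝ)) :=
    hGcont.aestronglyMeasurable.indicator hS
  rw [Measure.volume_eq_prod] at hF ⊢
  rw [integrable_prod_iff hF]
  have slice_eq : ∀ x : ℝ, 3 < x → (fun y => S₂.indicator G (x, y)) =
      (Set.Ioo 0 x).indicator (fun y => Real.exp ((4/9)*x^2*y - (4/9)*x^2*x)) := by
    intro x hx3; funext y
    by_cases hy : y ∈ Set.Ioo 0 x
    · rw [Set.indicator_of_mem hy, Set.indicator_of_mem (show (x,y) ∈ S₂ from ⟨hx3, hy.1, hy.2⟩)]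
      rfl
    · rw [Set.indicator_of_notMem hy, Set.indicator_of_notMem]
      intro h; exact hy ⟨h.2.1, h.2.2⟩
  have slice_zero : ∀ x : ℝ, ¬ 3 < x → (fun y => S₂.indicator G (x, y)) = 0 := by
    intro x hx3; funext y
    rw [Set.indicator_of_notMem]; · rfl
    intro h; exact hx3 h.1
  constructor
  · refine Filter.Eventually.of_forall (fun x => ?_)
    by_cases hx3 : 3 < x
    · rw [slice_eq x hx3, integrable_indicator_iff measurableSet_Ioo]
      exact slice_integrable _ _
    · rw [slice_zero x hx3]; exact integrable_zero _ _ _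
  · refine Integrable.mono' (g := (Set.Ioi (3:ℝ)).indicator (fun x => (9/4) * (x^2)⁻¹)) ?_ ?_ ?_
    · rw [integrable_indicator_iff measurableSet_Ioi]
      have hi : IntegrableOn (fun x : ℝ => x ^ (-2 : ℝ)) (Set.Ioi 3) :=
        integrableOn_Ioi_rpow_of_lt (by norm_num) (by norm_num)
      have h2 : IntegrableOn (fun x : ℝ => (9:ℝ)/4 * x ^ (-2 : ℝ)) (Set.Ioi 3) :=
        hi.const_mul (9/4)
      apply h2.congr_fun ?_ measurableSet_Ioi
      intro x hx
      have hx0 : (0:ℝ) < x := lt_trans (by norm_num) hx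
      have hxx : x ^ (-2:ℝ) = (x^2)⁻¹ := by
        rw [Real.rpow_neg hx0.le, show ((2:ℝ)) = ((2:ℕ):ℝ) by norm_num, Real.rpow_natCast]
      show (9:ℝ)/4 * x ^ (-2:ℝ) = 9/4 * (x^2)⁻¹
      rw [hxx]
    · exact hF.norm.integral_prod_right'
    · refine Filter.Eventually.of_forall (fun x => ?_)
      by_cases hx3 : 3 < x
      · have hx0 : (0:ℝ) < x := lt_trans (by norm_num) hx3
        have hc : (0:ℝ) < (4/9)*x^2 := by positivity
        simp only [congrFun (slice_eq x hx3)]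
        have hnn : 0 ≤ ∫ y, ‖(Set.Ioo 0 x).indicator
            (fun y => Real.exp ((4/9)*x^2*y - (4/9)*x^2*x)) y‖ :=
          integral_nonneg (fun y => norm_nonneg _)
        rw [Real.norm_of_nonneg hnn]
        have heq : ∀ y, ‖(Set.Ioo 0 x).indicator (fun y => Real.exp ((4/9)*x^2*y - (4/9)*x^2*x)) y‖
            = (Set.Ioo 0 x).indicator (fun y => Real.exp ((4/9)*x^2*y - (4/9)*x^2*x)) y := by
          intro y
          exact Real.norm_of_nonneg (Set.indicator_nonneg (fun y _ => (Real.exp_pos _).le) y)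
        simp only [heq]
        rw [integral_indicator measurableSet_Ioo]
        have := slice_le ((4/9)*x^2) x hc hx0
        rw [Set.indicator_of_mem (Set.mem_Ioi.2 hx3)]
        calc ∫ y in Set.Ioo 0 x, Real.exp ((4/9)*x^2*y - (4/9)*x^2*x)
            ≤ 1/((4/9)*x^2) := this
          _ = 9/4 * (x^2)⁻¹ := by field_simp
      · simp only [congrFun (slice_zero x hx3)]
        simp only [Pi.zero_apply, norm_zero, integral_zero, norm_zero]
        exact Set.indicator_nonneg (fun y _ => by positivity) x

lemma hScont : Continuous (fun p : ℝ × ℝ => Real.exp (2*(φ p.1 - φ p.2 - 2/3))) := by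
  simp only [φ]; continuity

lemma g'_integrable :
    IntegrableOn (fun p : ℝ × ℝ => Real.exp (2*(φ p.1 - φ p.2 - 2/3)))
      {p : ℝ × ℝ | 0 < p.2 ∧ p.2 < p.1} := by
  have hsub : {p : ℝ × ℝ | 0 < p.2 ∧ p.2 < p.1}
      ⊆ Set.Icc ((0:ℝ),(0:ℝ)) ((3:ℝ),(3:ℝ)) ∪ S₂ := by
    rintro ⟨x, y⟩ ⟨hy, hyx⟩
    by_cases hx3 : 3 < x
    · right; exact ⟨hx3, hy, hyx⟩
    · left
      simp only [Set.mem_Icc, Prod.le_def]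
      push_neg at hx3
      exact ⟨⟨by linarith, hy.le⟩, hx3, by linarith⟩
  refine IntegrableOn.mono_set ?_ hsub
  apply IntegrableOn.union
  · exact hScont.continuousOn.integrableOn_compact isCompact_Icc
  · have hG' : IntegrableOn G S₂ := (integrable_indicator_iff hS₂open.measurableSet).1 G_integrable
    refine Integrable.mono hG' hScont.aestronglyMeasurable.restrict ?_
    filter_upwards [ae_restrict_mem hS₂open.measurableSet] with p hp
    obtain ⟨hx3, hy, hyx⟩ := hp
    show _ ≤ ‖Real.exp ((4/9)*p.1^2*p.2 - (4/9)*p.1^2*p.1)‖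
    rw [Real.norm_of_nonneg (Real.exp_pos _).le, Real.norm_of_nonneg (Real.exp_pos _).le]
    apply Real.exp_le_exp.2
    have hB := lemB hx3.le hy hyx
    have hr : -(4/9) * p.1^2 * (p.1 - p.2) = (4/9)*p.1^2*p.2 - (4/9)*p.1^2*p.1 := by ring
    show 2*(φ p.1 - φ p.2 - 2/3) ≤ (4/9)*p.1^2*p.2 - (4/9)*p.1^2*p.1
    linarith

/-- There are `C > 0` and `h₀ > 0` such that for all `h ∈ (0,h₀)`,
`∬_{0<y<x} exp((2/h)(φ(x) − φ(y))) dy dx ≤ C exp(4/(3h))`. -/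
theorem remainder_term_bound :
    ∃ C > (0:ℝ), ∃ h₀ > (0:ℝ), ∀ h : ℝ, 0 < h → h < h₀ →
      (∫ p in {p : ℝ × ℝ | 0 < p.2 ∧ p.2 < p.1}, Real.exp ((2/h) * (φ p.1 - φ p.2)))
        ≤ C * Real.exp (4 / (3 * h)) := by
  set S : Set (ℝ × ℝ) := {p : ℝ × ℝ | 0 < p.2 ∧ p.2 < p.1} with hSdef
  have hSmeas : MeasurableSet S := by
    have h2 : IsOpen {p : ℝ × ℝ | 0 < p.2} := isOpen_lt continuous_const continuous_snd
    have h3 : IsOpen {p : ℝ × ℝ | p.2 < p.1} := isOpen_lt continuous_snd continuous_fst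
    have : S = {p : ℝ × ℝ | 0 < p.2} ∩ {p : ℝ × ℝ | p.2 < p.1} := by
      ext p; simp [hSdef, Set.mem_inter_iff]
    rw [this]; exact (h2.inter h3).measurableSet
  set C0 : ℝ := ∫ p in S, Real.exp (2*(φ p.1 - φ p.2 - 2/3)) with hC0
  have hC0nn : 0 ≤ C0 := integral_nonneg (fun p => (Real.exp_pos _).le)
  refine ⟨C0 + 1, by linarith, 1, one_pos, ?_⟩
  intro h hh h1
  have hfeq : ∀ p : ℝ × ℝ, Real.exp ((2/h) * (φ p.1 - φ p.2))
      = Real.exp (4 / (3*h)) * Real.exp ((2/h) * (φ p.1 - φ p.2 - 2/3)) := by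
    intro p
    rw [← Real.exp_add]
    congr 1
    field_simp
    ring
  simp only [hfeq]
  rw [integral_const_mul]
  have hmono : (∫ p in S, Real.exp ((2/h) * (φ p.1 - φ p.2 - 2/3))) ≤ C0 := by
    rw [hC0]
    refine integral_mono_of_nonneg
      (Filter.Eventually.of_forall fun p => (Real.exp_pos _).le) g'_integrable ?_
    filter_upwards [ae_restrict_mem hSmeas] with p hp
    apply Real.exp_le_exp.2
    have hE : φ p.1 - φ p.2 - 2/3 ≤ 0 := by
      have := lemA hp.1 hp.2; linarith
    have h2h : (2:ℝ) ≤ 2/h := by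
      rw [le_div_iff₀ hh]; nlinarith
    calc (2/h) * (φ p.1 - φ p.2 - 2/3) ≤ 2 * (φ p.1 - φ p.2 - 2/3) :=
          mul_le_mul_of_nonpos_right h2h hE
      _ = 2*(φ p.1 - φ p.2 - 2/3) := by ring
  calc Real.exp (4/(3*h)) * ∫ p in S, Real.exp ((2/h) * (φ p.1 - φ p.2 - 2/3))
      ≤ Real.exp (4/(3*h)) * C0 :=
        mul_le_mul_of_nonneg_left hmono (Real.exp_pos _).le
    _ ≤ Real.exp (4/(3*h)) * (C0 + 1) := by nlinarith [Real.exp_pos (4/(3*h))]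
    _ = (C0 + 1) * Real.exp (4/(3*h)) := by ring

end
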